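/- arXiv:1808.02375 — 3 statements merged into one kernel-verified Lean document; each statement's English description precedes it below -/
import Mathlib

section
/- If two distinct vertices u and v of BH_n have a common neighbor, then they have exactly 2 common neighbors or exactly 2n common neighbors; moreover they have 2n common neighbors if and only if they differ only in the first coordinate (by 2 mod 4). -/
/-- The `n`-dimensional balanced hypercube `BH_n` (Wu–Huang). Vertices are
elements of `{0,1,2,3}^n`; a vertex `(a_0,…,a_{n-1})` is adjacent to
`((a_0 ± 1) mod 4, a_1, …, a_{n-1})` and, for each `i ≠ 0`, to
`((a_0 ± 1) mod 4, …, (a_i + (-1)^{a_0}) mod 4, …, a_{n-1})`. -/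
def balancedHypercube (n : ℕ) [NeZero n] :
    SimpleGraph (Fin n → ZMod 4) :=
  SimpleGraph.fromRel (fun u v =>
    (v 0 = u 0 + 1 ∨ v 0 = u 0 - 1) ∧
    ((∀ i, i ≠ 0 → v i = u i) ∨
      ∃ j : Fin n, j ≠ 0 ∧ v j = u j + (-1 : ZMod 4) ^ (u 0).val ∧
        ∀ i, i ≠ 0 → i ≠ j → v i = u i))

/-!
A neighbour of `u` changes `u 0` by `±1` and at most one further coordinate, by
`s = (-1)^{u 0}`; so `u` has `2n` neighbours, and adding `2` to the first coordinate changes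
neither `s` nor the neighbourhood. Hence `u` and `u + 2e₀` share all `2n` neighbours, and with a
common neighbour `w` of `u` and `v` also `w + 2e₀` is one. Two distinct common neighbours `x`,
`y` with the same first coordinate differ at some `k ≠ 0`, where `{x k, y k}` equals both
`{u k, u k + s}` and `{v k, v k + s}`; as `s = ±1` this forces `u k = v k`, and the one of `x`,
`y` that moves coordinate `k` fixes all others for `u` and `v` alike. So `u`, `v` agree off `0`,
i.e. `v = u + 2e₀`. Otherwise common neighbours are determined by their first coordinate, which
takes only the values `u 0 ± 1`.
-/

namespace BalancedHypercube

open SimpleGraph Function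

def twist (x : ZMod 4) : ZMod 4 := (-1) ^ x.val

lemma twist_add_one : ∀ x : ZMod 4, twist (x + 1) = -twist x := by decide
lemma twist_sub_one : ∀ x : ZMod 4, twist (x - 1) = -twist x := by decide
lemma twist_add_two : ∀ x : ZMod 4, twist (x + 2) = twist x := by decide
lemma twist_ne_zero : ∀ x : ZMod 4, twist x ≠ 0 := by decide

lemma eq_of_pair_eq_pair_add_twist (c : ZMod 4) :
    ∀ a b p q : ZMod 4, a ≠ b →
      (a = p ∨ a = p + twist c) → (b = p ∨ b = p + twist c) →
      (a = q ∨ a = q + twist c) → (b = q ∨ b = q + twist c) → p = q := by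
  revert c; decide

lemma eq_or_eq_add_two_of_pm_one : ∀ a b c : ZMod 4,
    (a = c + 1 ∨ a = c - 1) → (b = c + 1 ∨ b = c - 1) → b = a ∨ b = a + 2 := by decide

variable {n : ℕ} [NeZero n]

def Step (u w : Fin n → ZMod 4) : Prop :=
  (w 0 = u 0 + 1 ∨ w 0 = u 0 - 1) ∧
    ((∀ i ≠ 0, w i = u i) ∨
      ∃ j ≠ 0, w j = u j + twist (u 0) ∧ ∀ i ≠ 0, i ≠ j → w i = u i)

lemma Step.ne {u w : Fin n → ZMod 4} (h : Step u w) : u ≠ w := by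
  have : ∀ x : ZMod 4, ¬(x = x + 1 ∨ x = x - 1) := by decide
  rintro rfl
  exact this _ h.1

lemma Step.symm {u w : Fin n → ZMod 4} (h : Step u w) : Step w u := by
  obtain ⟨h0, h1⟩ := h
  have ht : twist (w 0) = -twist (u 0) := by
    rcases h0 with h0 | h0 <;> rw [h0]
    exacts [twist_add_one _, twist_sub_one _]
  refine ⟨by rcases h0 with h0 | h0 <;> rw [h0] <;> simp, ?_⟩
  rcases h1 with h1 | ⟨j, hj, hwj, hw⟩
  · exact Or.inl fun i hi => (h1 i hi).symm
  · exact Or.inr ⟨j, hj, by rw [hwj, ht]; ring, fun i hi hij => (hw i hi hij).symm⟩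

lemma adj_iff {u w : Fin n → ZMod 4} : (balancedHypercube n).Adj u w ↔ Step u w := by
  rw [balancedHypercube, fromRel_adj]
  exact ⟨fun ⟨_, h⟩ => h.elim id Step.symm, fun h => ⟨h.ne, Or.inl h⟩⟩

/-- For `j = 0` the outer update overwrites the inner one, so `neighbor u (b, 0)` changes `u 0`
only. -/
def neighbor (u : Fin n → ZMod 4) (p : Bool × Fin n) : Fin n → ZMod 4 :=
  update (update u p.2 (u p.2 + twist (u 0))) 0 (u 0 + if p.1 then 1 else -1)

lemma neighbor_apply_zero (u : Fin n → ZMod 4) (b : Bool) (j : Fin n) :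
    neighbor u (b, j) 0 = u 0 + if b then 1 else -1 :=
  update_self ..

lemma neighbor_apply_self (u : Fin n → ZMod 4) {b : Bool} {j : Fin n} (hj : j ≠ 0) :
    neighbor u (b, j) j = u j + twist (u 0) := by
  rw [neighbor, update_of_ne hj, update_self]

lemma neighbor_apply_of_ne (u : Fin n → ZMod 4) {b : Bool} {i j : Fin n} (hi : i ≠ 0)
    (hij : i ≠ j) : neighbor u (b, j) i = u i := by
  rw [neighbor, update_of_ne hi, update_of_ne hij]

lemma neighbor_injective (u : Fin n → ZMod 4) : Injective (neighbor u) := by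
  have sep : ∀ {b b' : Bool} {j j' : Fin n}, j ≠ 0 → j ≠ j' →
      neighbor u (b, j) ≠ neighbor u (b', j') := by
    intro b b' j j' hj hjj' h
    have := congrFun h j
    rw [neighbor_apply_self u hj, neighbor_apply_of_ne u hj hjj'] at this
    exact twist_ne_zero _ (by linear_combination this)
  rintro ⟨b, j⟩ ⟨b', j'⟩ h
  have hb : b = b' := by
    have h0 := congrFun h 0
    rw [neighbor_apply_zero, neighbor_apply_zero, add_right_inj] at h0
    revert h0; cases b <;> cases b' <;> decide
  by_contra hne
  have hjj' : j ≠ j' := fun hjj' => hne (by rw [hb, hjj'])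
  by_cases hj : j = 0
  · exact sep (hj ▸ hjj'.symm) hjj'.symm h.symm
  · exact sep hj hjj' h

lemma step_neighbor (u : Fin n → ZMod 4) (p : Bool × Fin n) : Step u (neighbor u p) := by
  obtain ⟨b, j⟩ := p
  refine ⟨by cases b <;> simp [neighbor_apply_zero, sub_eq_add_neg], ?_⟩
  by_cases hj : j = 0
  · subst hj
    exact Or.inl fun i hi => neighbor_apply_of_ne u hi hi
  · exact Or.inr ⟨j, hj, neighbor_apply_self u hj,
      fun i hi hij => neighbor_apply_of_ne u hi hij⟩

lemma exists_neighbor_eq_of_step {u w : Fin n → ZMod 4} (h : Step u w) :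
    ∃ p, neighbor u p = w := by
  obtain ⟨h0, h1⟩ := h
  obtain ⟨b, hb⟩ : ∃ b : Bool, w 0 = u 0 + if b then 1 else -1 := by
    rcases h0 with h0 | h0
    exacts [⟨true, h0⟩, ⟨false, h0.trans (sub_eq_add_neg _ _)⟩]
  rcases h1 with h1 | ⟨j, hj, hwj, hw⟩
  · refine ⟨(b, 0), funext fun i => ?_⟩
    by_cases hi : i = 0
    · rw [hi, neighbor_apply_zero, hb]
    · rw [neighbor_apply_of_ne u hi hi, h1 i hi]
  · refine ⟨(b, j), funext fun i => ?_⟩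
    by_cases hi : i = 0
    · rw [hi, neighbor_apply_zero, hb]
    by_cases hij : i = j
    · rw [hij, neighbor_apply_self u hj, hwj]
    · rw [neighbor_apply_of_ne u hi hij, hw i hi hij]

lemma neighborSet_eq_range (u : Fin n → ZMod 4) :
    (balancedHypercube n).neighborSet u = Set.range (neighbor u) := by
  ext w
  rw [mem_neighborSet, adj_iff]
  exact ⟨exists_neighbor_eq_of_step, fun ⟨p, hp⟩ => hp ▸ step_neighbor u p⟩

lemma ncard_neighborSet (u : Fin n → ZMod 4) :
    ((balancedHypercube n).neighborSet u).ncard = 2 * n := by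
  rw [neighborSet_eq_range, Set.ncard_range_of_injective (neighbor_injective u),
    Nat.card_eq_fintype_card, Fintype.card_prod, Fintype.card_bool, Fintype.card_fin]

def flipZero (u : Fin n → ZMod 4) : Fin n → ZMod 4 := update u 0 (u 0 + 2)

lemma flipZero_apply_zero (u : Fin n → ZMod 4) : flipZero u 0 = u 0 + 2 := update_self ..

lemma flipZero_apply_of_ne (u : Fin n → ZMod 4) {i : Fin n} (hi : i ≠ 0) : flipZero u i = u i :=
  update_of_ne hi ..

lemma flipZero_flipZero (u : Fin n → ZMod 4) : flipZero (flipZero u) = u := by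
  have four : (2 + 2 : ZMod 4) = 0 := by decide
  funext i
  by_cases hi : i = 0
  · rw [hi, flipZero_apply_zero, flipZero_apply_zero, add_assoc, four, add_zero]
  · rw [flipZero_apply_of_ne _ hi, flipZero_apply_of_ne _ hi]

lemma ne_flipZero (u : Fin n → ZMod 4) : u ≠ flipZero u := fun h => by
  have h0 := congrFun h 0
  rw [flipZero_apply_zero, left_eq_add] at h0
  exact absurd h0 (by decide)

lemma Step.flipZero_right {u w : Fin n → ZMod 4} (h : Step u w) : Step u (flipZero w) := by
  have flip_pm_one : ∀ a c : ZMod 4,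
      (c = a + 1 ∨ c = a - 1) → (c + 2 = a + 1 ∨ c + 2 = a - 1) := by
    decide
  refine ⟨flipZero_apply_zero w ▸ flip_pm_one _ _ h.1, ?_⟩
  rcases h.2 with h1 | ⟨j, hj, hwj, hw⟩
  · exact Or.inl fun i hi => (flipZero_apply_of_ne w hi).trans (h1 i hi)
  · exact Or.inr ⟨j, hj, (flipZero_apply_of_ne w hj).trans hwj,
      fun i hi hij => (flipZero_apply_of_ne w hi).trans (hw i hi hij)⟩

lemma Step.apply_eq_or {u w : Fin n → ZMod 4} (h : Step u w) {i : Fin n} (hi : i ≠ 0) :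
    w i = u i ∨ w i = u i + twist (u 0) := by
  rcases h.2 with h1 | ⟨j, -, hwj, hw⟩
  · exact Or.inl (h1 i hi)
  · by_cases hij : i = j
    · exact Or.inr (hij ▸ hwj)
    · exact Or.inl (hw i hi hij)

lemma Step.apply_eq_of_apply_ne {u w : Fin n → ZMod 4} (h : Step u w) {i k : Fin n} (hi : i ≠ 0)
    (hwi : w i ≠ u i) (hk : k ≠ 0) (hki : k ≠ i) : w k = u k := by
  rcases h.2 with h1 | ⟨j, -, -, hw⟩
  · exact absurd (h1 i hi) hwi
  · obtain rfl : i = j := by_contra fun hij => hwi (hw i hi hij)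
    exact hw k hk hki

variable {u v w : Fin n → ZMod 4}

lemma adj_flipZero_right (h : (balancedHypercube n).Adj u w) :
    (balancedHypercube n).Adj u (flipZero w) :=
  adj_iff.2 (adj_iff.1 h).flipZero_right

lemma adj_flipZero_left_iff :
    (balancedHypercube n).Adj (flipZero u) w ↔ (balancedHypercube n).Adj u w := by
  refine ⟨fun h => ?_, fun h => (adj_flipZero_right h.symm).symm⟩
  simpa only [flipZero_flipZero] using (adj_flipZero_right h.symm).symm

lemma commonNeighbors_flipZero :
    (balancedHypercube n).commonNeighbors u (flipZero u) = (balancedHypercube n).neighborSet u := by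
  ext w
  simp only [mem_commonNeighbors, mem_neighborSet, adj_flipZero_left_iff, and_self]

lemma apply_zero_eq_or_of_adj_of_adj (hu : (balancedHypercube n).Adj u w)
    (hv : (balancedHypercube n).Adj v w) : v 0 = u 0 ∨ v 0 = u 0 + 2 :=
  eq_or_eq_add_two_of_pm_one _ _ _ (adj_iff.1 hu.symm).1 (adj_iff.1 hv.symm).1

lemma apply_eq_of_common_adj {x y : Fin n → ZMod 4} (hux : (balancedHypercube n).Adj u x)
    (hvx : (balancedHypercube n).Adj v x) (huy : (balancedHypercube n).Adj u y)
    (hvy : (balancedHypercube n).Adj v y) (h0 : x 0 = y 0) (hxy : x ≠ y) {i : Fin n}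
    (hi : i ≠ 0) : u i = v i := by
  obtain ⟨k, hk⟩ := Function.ne_iff.1 hxy
  have hk0 : k ≠ 0 := by rintro rfl; exact hk h0
  have htwist : twist (v 0) = twist (u 0) := by
    rcases apply_zero_eq_or_of_adj_of_adj hux hvx with h | h <;> rw [h]
    exact twist_add_two _
  rw [adj_iff] at hux hvx huy hvy
  have huvk : u k = v k := eq_of_pair_eq_pair_add_twist (u 0) _ _ _ _ hk
    (hux.apply_eq_or hk0) (huy.apply_eq_or hk0) (htwist ▸ hvx.apply_eq_or hk0)
    (htwist ▸ hvy.apply_eq_or hk0)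
  by_cases hik : i = k
  · rwa [hik]
  obtain ⟨z, hzu, hzv, hzk⟩ : ∃ z, Step u z ∧ Step v z ∧ z k ≠ u k := by
    by_cases hxk : x k = u k
    · exact ⟨y, huy, hvy, fun hyk => hk (hxk.trans hyk.symm)⟩
    · exact ⟨x, hux, hvx, hxk⟩
  rw [← hzu.apply_eq_of_apply_ne hk0 hzk hi hik,
    hzv.apply_eq_of_apply_ne hk0 (huvk ▸ hzk) hi hik]

lemma eq_flipZero_of_adj_of_adj (huv : u ≠ v) (hu : (balancedHypercube n).Adj u w)
    (hv : (balancedHypercube n).Adj v w) (hoff : ∀ i ≠ 0, u i = v i) : v = flipZero u := by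
  rcases apply_zero_eq_or_of_adj_of_adj hu hv with h | h
  · refine absurd (funext fun i => ?_) huv
    by_cases hi : i = 0
    · rw [hi, h]
    · exact hoff i hi
  · funext i
    by_cases hi : i = 0
    · rw [hi, h, flipZero_apply_zero]
    · rw [flipZero_apply_of_ne u hi, hoff i hi]

lemma commonNeighbors_eq_pair (huv : u ≠ v) (hv : v ≠ flipZero u)
    (hw : w ∈ (balancedHypercube n).commonNeighbors u v) :
    (balancedHypercube n).commonNeighbors u v = {w, flipZero w} := by
  have flip_mem : flipZero w ∈ (balancedHypercube n).commonNeighbors u v :=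
    ⟨adj_flipZero_right hw.1, adj_flipZero_right hw.2⟩
  have inj : ∀ x ∈ (balancedHypercube n).commonNeighbors u v,
      ∀ y ∈ (balancedHypercube n).commonNeighbors u v, x 0 = y 0 → x = y := by
    intro x hx y hy h0
    by_contra hxy
    exact hv (eq_flipZero_of_adj_of_adj huv hx.1 hx.2
      fun i hi => apply_eq_of_common_adj hx.1 hx.2 hy.1 hy.2 h0 hxy hi)
  refine Set.Subset.antisymm (fun x hx => ?_)
    (Set.insert_subset hw (Set.singleton_subset_iff.2 flip_mem))
  rcases eq_or_eq_add_two_of_pm_one _ _ _ (adj_iff.1 hw.1).1 (adj_iff.1 hx.1).1 with h | h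
  · exact Or.inl (inj x hx w hw h)
  · exact Or.inr (inj x hx _ flip_mem (h.trans (flipZero_apply_zero w).symm))

lemma ncard_commonNeighbors_eq_two (huv : u ≠ v) (hv : v ≠ flipZero u)
    (hw : w ∈ (balancedHypercube n).commonNeighbors u v) :
    ((balancedHypercube n).commonNeighbors u v).ncard = 2 := by
  rw [commonNeighbors_eq_pair huv hv hw, Set.ncard_pair (ne_flipZero w)]

end BalancedHypercube

open BalancedHypercube in
theorem balancedHypercube_common_neighbors_general (n : ℕ) [NeZero n]
    (u v : Fin n → ZMod 4) (huv : u ≠ v)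
    (h : ∃ w, (balancedHypercube n).Adj u w ∧ (balancedHypercube n).Adj v w) :
    ({w | (balancedHypercube n).Adj u w ∧ (balancedHypercube n).Adj v w}.ncard = 2 ∨
      {w | (balancedHypercube n).Adj u w ∧ (balancedHypercube n).Adj v w}.ncard = 2 * n) ∧
    ({w | (balancedHypercube n).Adj u w ∧ (balancedHypercube n).Adj v w}.ncard = 2 * n ↔
      v = Function.update u 0 (u 0 + 2)) := by
  obtain ⟨w, hu, hv⟩ := h
  have hS : {w | (balancedHypercube n).Adj u w ∧ (balancedHypercube n).Adj v w} =
      (balancedHypercube n).commonNeighbors u v := rfl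
  rw [hS]
  by_cases hflip : v = flipZero u
  · rw [hflip, commonNeighbors_flipZero, ncard_neighborSet]
    exact ⟨Or.inr rfl, iff_of_true rfl rfl⟩
  rw [ncard_commonNeighbors_eq_two huv hflip ⟨hu, hv⟩]
  refine ⟨Or.inl rfl, iff_of_false (fun h2n => hflip ?_) hflip⟩
  have : Subsingleton (Fin n) := Fin.subsingleton_iff_le_one.2 (by omega)
  exact eq_flipZero_of_adj_of_adj huv hu hv fun i hi => absurd (Subsingleton.elim i 0) hi

/-- If two distinct vertices of `BH_n` have a common neighbor, then they have
exactly `2` or exactly `2n` common neighbors, and they have `2n` common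
neighbors iff they differ only in the first coordinate (by `2` mod `4`). -/
theorem balancedHypercube_common_neighbors (n : ℕ) [NeZero n] (hn : 1 ≤ n)
    (u v : Fin n → ZMod 4) (huv : u ≠ v)
    (h : ∃ w, (balancedHypercube n).Adj u w ∧ (balancedHypercube n).Adj v w) :
    ({w | (balancedHypercube n).Adj u w ∧ (balancedHypercube n).Adj v w}.ncard = 2 ∨
      {w | (balancedHypercube n).Adj u w ∧ (balancedHypercube n).Adj v w}.ncard = 2 * n) ∧
    ({w | (balancedHypercube n).Adj u w ∧ (balancedHypercube n).Adj v w}.ncard = 2 * n ↔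
      v = Function.update u 0 (u 0 + 2)) :=
  balancedHypercube_common_neighbors_general n u v huv h
end

section
/- For n ≥ 2, there exists a family of exactly n vertex-disjoint paths of length 2 (copies of K_{1,2}) in BH_n whose vertex deletion disconnects BH_n; consequently κ(BH_n; K_{1,2}) ≤ n. -/
/-!
The neighbours of the vertex `0` of `BH_n` are the `2n` vertices with first coordinate `±1` and
at most one other coordinate, say the `j`-th, equal to `1`. For each `j`, the two neighbours of
this shape are joined through the vertex with first coordinate `2`, giving `n` disjoint paths on
three vertices. Deleting them isolates `0`, and for `n ≥ 2` some vertex other than `0` survives.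
-/

theorem SimpleGraph.not_connected_induce_compl_of_neighborSet_subset {V : Type*}
    {G : SimpleGraph V} {S : Set V} {v w : V} (hv : v ∉ S) (hw : w ∉ S) (hvw : v ≠ w)
    (hN : G.neighborSet v ⊆ S) : ¬ (G.induce Sᶜ).Connected := by
  intro hconn
  obtain ⟨p⟩ := hconn.preconnected ⟨v, hv⟩ ⟨w, hw⟩
  rcases p with _ | @⟨-, u, -, hadj, -⟩
  · exact hvw rfl
  · exact u.2 (hN hadj)

namespace balancedHypercube

variable {n : ℕ} [NeZero n]

def spoke (j : Fin n) (c : ZMod 4) : Fin n → ZMod 4 :=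
  fun i => if i = 0 then c else if i = j then 1 else 0

@[simp]
lemma spoke_apply_zero (j : Fin n) (c : ZMod 4) : spoke j c 0 = c := by
  simp [spoke]

lemma spoke_apply_of_ne_zero {i : Fin n} (hi : i ≠ 0) (j : Fin n) (c : ZMod 4) :
    spoke j c i = if i = j then 1 else 0 := by
  simp [spoke, hi]

lemma spoke_ne_zero {j : Fin n} (hj : j ≠ 0) (c : ZMod 4) : spoke j c ≠ 0 := by
  intro he
  simpa +decide [spoke_apply_of_ne_zero hj] using congrFun he j

lemma spoke_ne_spoke {j j' : Fin n} (h : j ≠ j') (c c' : ZMod 4) : spoke j c ≠ spoke j' c' := by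
  intro he
  rcases eq_or_ne j 0 with hj | hj
  · have hj' : j' ≠ 0 := hj ▸ h.symm
    simpa +decide [spoke_apply_of_ne_zero hj', h.symm] using congrFun he j'
  · simpa +decide [spoke_apply_of_ne_zero hj, h] using congrFun he j

lemma eq_spoke_of_apply {v : Fin n → ZMod 4} {j : Fin n} (hj : j ≠ 0 → v j = 1)
    (hrest : ∀ i, i ≠ 0 → i ≠ j → v i = 0) : v = spoke j (v 0) := by
  funext i
  rcases eq_or_ne i 0 with rfl | hi
  · simp
  rw [spoke_apply_of_ne_zero hi]
  split_ifs with hij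
  · exact hij ▸ hj (hij ▸ hi)
  · exact hrest i hi hij

lemma spoke_adj_spoke (j : Fin n) {c d : ZMod 4} (h : d = c + 1 ∨ d = c - 1) :
    (balancedHypercube n).Adj (spoke j c) (spoke j d) := by
  have hcd : c ≠ d := by
    rcases h with rfl | rfl <;> revert c <;> decide
  refine (SimpleGraph.fromRel_adj _ _ _).2 ⟨fun he => hcd (by simpa using congrFun he 0), ?_⟩
  exact Or.inl ⟨by simpa using h, Or.inl fun i hi => by simp [spoke_apply_of_ne_zero hi]⟩

lemma exists_eq_spoke_of_adj_zero {v : Fin n → ZMod 4} (h : (balancedHypercube n).Adj 0 v) :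
    v 0 ≠ 0 ∧ ∃ j, v = spoke j (v 0) := by
  obtain ⟨-, ⟨h0, hrest⟩ | ⟨h0, hrest⟩⟩ := (SimpleGraph.fromRel_adj _ _ _).1 h
  · simp only [Pi.zero_apply, zero_add, ZMod.val_zero, pow_zero] at h0 hrest
    refine ⟨by rcases h0 with h0 | h0 <;> rw [h0] <;> decide, ?_⟩
    rcases hrest with hrest | ⟨j, -, hj, hrest⟩
    · exact ⟨0, eq_spoke_of_apply (absurd rfl) fun i hi _ => hrest i hi⟩
    · exact ⟨j, eq_spoke_of_apply (fun _ => hj) hrest⟩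
  · simp only [Pi.zero_apply] at h0 hrest
    have hodd : ∀ a : ZMod 4, (0 = a + 1 ∨ 0 = a - 1) → a ≠ 0 ∧ (-1 : ZMod 4) ^ a.val = -1 := by
      decide
    obtain ⟨hv0, hsign⟩ := hodd _ h0
    refine ⟨hv0, ?_⟩
    rcases hrest with hrest | ⟨j, -, hj, hrest⟩
    · exact ⟨0, eq_spoke_of_apply (absurd rfl) fun i hi _ => (hrest i hi).symm⟩
    · rw [hsign, eq_comm, add_neg_eq_zero] at hj
      exact ⟨j, eq_spoke_of_apply (fun _ => hj) fun i hi hij => (hrest i hi hij).symm⟩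

def spokePath (j : Fin n) : Set (Fin n → ZMod 4) :=
  {spoke j 1, spoke j 2, spoke j 3}

lemma apply_zero_ne_zero_of_mem_spokePath {v : Fin n → ZMod 4} {j : Fin n}
    (hv : v ∈ spokePath j) : v 0 ≠ 0 := by
  rcases hv with rfl | rfl | rfl <;> simp +decide

lemma spoke_mem_spokePath (j : Fin n) {c : ZMod 4} (hc : c ≠ 0) : spoke j c ∈ spokePath j := by
  obtain rfl | rfl | rfl : c = 1 ∨ c = 2 ∨ c = 3 := by revert c; decide
  all_goals simp [spokePath]

lemma pairwise_disjoint_spokePath :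
    Pairwise fun i j : Fin n => Disjoint (spokePath i) (spokePath j) := by
  intro j j' h
  rw [Set.disjoint_left]
  rintro _ (rfl | rfl | rfl) <;> rintro (he | he | he) <;> exact spoke_ne_spoke h _ _ he

lemma spokePath_injective : Function.Injective (spokePath (n := n)) := by
  intro j j' he
  by_contra h
  have hmem := spoke_mem_spokePath j (c := 1) (by decide)
  exact Set.disjoint_left.1 (pairwise_disjoint_spokePath h) hmem (he ▸ hmem)

lemma exists_spokePath_eq_path3 (j : Fin n) :
    ∃ x y z : Fin n → ZMod 4, x ≠ z ∧
      (balancedHypercube n).Adj y x ∧ (balancedHypercube n).Adj y z ∧ spokePath j = {x, y, z} :=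
  ⟨spoke j 1, spoke j 2, spoke j 3, fun he => by simpa +decide using congrFun he 0,
    spoke_adj_spoke j (by decide), spoke_adj_spoke j (by decide), rfl⟩

lemma notMem_iUnion_spokePath {v : Fin n → ZMod 4} (hv : v 0 = 0) :
    v ∉ ⋃ j, spokePath j := by
  simp only [Set.mem_iUnion, not_exists]
  exact fun j hmem => apply_zero_ne_zero_of_mem_spokePath hmem hv

lemma neighborSet_zero_subset_iUnion_spokePath :
    (balancedHypercube n).neighborSet 0 ⊆ ⋃ j, spokePath j := by
  intro v hv
  obtain ⟨hv0, j, hj⟩ := exists_eq_spoke_of_adj_zero hv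
  exact Set.mem_iUnion.2 ⟨j, hj ▸ spoke_mem_spokePath j hv0⟩

end balancedHypercube

open balancedHypercube in
/-- For `n ≥ 2`, there is a family of exactly `n` vertex-disjoint copies of
`K_{1,2}` (paths on three vertices) in `BH_n` whose vertex deletion disconnects
`BH_n`; hence `κ(BH_n; K_{1,2}) ≤ n`. -/
theorem balancedHypercube_K12_structure_cut (n : ℕ) [NeZero n] (hn : 2 ≤ n) :
    ∃ F : Finset (Set (Fin n → ZMod 4)), F.card = n ∧
      (↑F : Set (Set (Fin n → ZMod 4))).Pairwise Disjoint ∧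
      (∀ A ∈ F, ∃ x y z : Fin n → ZMod 4, x ≠ z ∧
        (balancedHypercube n).Adj y x ∧ (balancedHypercube n).Adj y z ∧
        A = {x, y, z}) ∧
      ¬ ((balancedHypercube n).induce ((⋃ A ∈ F, A)ᶜ)).Connected := by
  refine ⟨Finset.univ.image spokePath, ?_, ?_, ?_, ?_⟩
  · rw [Finset.card_image_of_injective _ spokePath_injective, Finset.card_univ, Fintype.card_fin]
  · rw [Finset.coe_image]
    exact Set.Pairwise.image fun _ _ _ _ h => pairwise_disjoint_spokePath h
  · simp only [Finset.mem_image, Finset.mem_univ, true_and, forall_exists_index,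
      forall_apply_eq_imp_iff]
    exact exists_spokePath_eq_path3
  · have hcut : (⋃ A ∈ Finset.univ.image spokePath, A) = ⋃ j : Fin n, spokePath j := by
      simp
    have hone : (⟨1, hn⟩ : Fin n) ≠ 0 := Fin.ne_of_val_ne one_ne_zero
    rw [hcut]
    exact SimpleGraph.not_connected_induce_compl_of_neighborSet_subset
      (notMem_iUnion_spokePath rfl) (notMem_iUnion_spokePath (spoke_apply_zero _ 0))
      (spoke_ne_zero hone 0).symm neighborSet_zero_subset_iUnion_spokePath
end

section
/- For n ≥ 2, there exists a family of exactly n vertex-disjoint 4-cycles in BH_n whose vertex deletion disconnects BH_n; hence κ(BH_n; C_4) ≤ n. -/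
open Function

namespace SimpleGraph

variable {V : Type*} {G : SimpleGraph V}

theorem not_connected_induce_of_isolated {s : Set V} {v w : V} (hv : v ∈ s) (hw : w ∈ s)
    (hvw : v ≠ w) (hisol : ∀ u, G.Adj v u → u ∉ s) : ¬ (G.induce s).Connected := by
  intro hconn
  obtain ⟨p⟩ := hconn.preconnected ⟨v, hv⟩ ⟨w, hw⟩
  exact hisol _ (p.adj_snd (p.not_nil_of_ne (by simpa using hvw))) p.snd.2

theorem exists_four_cycle_of_adj_succ {f : ZMod 4 → V} (hf : Injective f)
    (hadj : ∀ k, G.Adj (f k) (f (k + 1))) :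
    ∃ a b c d : V, a ≠ c ∧ b ≠ d ∧ G.Adj a b ∧ G.Adj b c ∧ G.Adj c d ∧ G.Adj d a ∧
      Set.range f = {a, b, c, d} := by
  refine ⟨f 0, f 1, f 2, f 3, hf.ne (by decide), hf.ne (by decide), hadj 0, hadj 1, hadj 2,
    hadj 3, ?_⟩
  rw [← Set.image_univ, show (Set.univ : Set (ZMod 4)) = {0, 1, 2, 3} by
    ext k; simp only [Set.mem_univ, Set.mem_insert_iff, Set.mem_singleton_iff, true_iff]
    revert k; decide]
  simp only [Set.image_insert_eq, Set.image_singleton]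

end SimpleGraph

theorem Pairwise.injective_of_disjoint {ι α : Type*} {f : ι → Set α}
    (hdisj : Pairwise (Disjoint on f)) (hne : ∀ i, (f i).Nonempty) : Injective f := by
  intro i j hij
  by_contra h
  have hdisj_ij : Disjoint (f i) (f j) := hdisj h
  rw [hij, disjoint_self] at hdisj_ij
  exact (hne j).ne_empty hdisj_ij

namespace BalancedHypercube

variable {n : ℕ} [NeZero n]

theorem adj_zero_cases {y : Fin n → ZMod 4} (h : (balancedHypercube n).Adj 0 y) :
    (y 0 = 1 ∨ y 0 = -1) ∧ ((∀ i, i ≠ 0 → y i = 0) ∨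
      ∃ j, j ≠ 0 ∧ y j = 1 ∧ ∀ i, i ≠ 0 → i ≠ j → y i = 0) := by
  rw [balancedHypercube, SimpleGraph.fromRel_adj] at h
  obtain ⟨-, ⟨h0, htail⟩ | ⟨h0, htail⟩⟩ := h
  · simpa using ⟨h0, htail⟩
  · simp only [Pi.zero_apply] at h0 htail
    have hhead : y 0 = 1 ∨ y 0 = -1 := by
      revert h0; generalize y 0 = a; revert a; decide
    refine ⟨hhead, ?_⟩
    have hstep : ∀ b : ZMod 4, 0 = b + (-1) ^ (y 0).val → b = 1 := by
      revert hhead; generalize y 0 = a; revert a; decide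
    rcases htail with htail | ⟨j, hj, hyj, htail⟩
    · exact Or.inl fun i hi => (htail i hi).symm
    · exact Or.inr ⟨j, hj, hstep _ hyj, fun i hi hij => (htail i hi hij).symm⟩

def cycleVertex (j : Fin n) (c : ZMod 4 → ZMod 4) (k : ZMod 4) : Fin n → ZMod 4 :=
  fun i => if i = 0 then k else if i = j then c k else 0

theorem cycleVertex_injective (j : Fin n) (c : ZMod 4 → ZMod 4) :
    Injective (cycleVertex j c) := fun k k' h => by
  simpa [cycleVertex] using congrFun h 0

theorem mem_range_cycleVertex {j : Fin n} (hj : j ≠ 0) {c : ZMod 4 → ZMod 4}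
    {v : Fin n → ZMod 4} :
    v ∈ Set.range (cycleVertex j c) ↔
      v j = c (v 0) ∧ ∀ i, i ≠ 0 → i ≠ j → v i = 0 := by
  constructor
  · rintro ⟨k, rfl⟩
    refine ⟨by simp [cycleVertex, hj], fun i hi hij => by simp [cycleVertex, hi, hij]⟩
  · rintro ⟨hvj, hv⟩
    refine ⟨v 0, funext fun i => ?_⟩
    by_cases hi : i = 0
    · simp [cycleVertex, hi]
    by_cases hij : i = j
    · subst hij; simp [cycleVertex, hi, hvj]
    · simp [cycleVertex, hi, hij, hv i hi hij]

theorem adj_cycleVertex_succ {j : Fin n} (hj : j ≠ 0) {c : ZMod 4 → ZMod 4} (k : ZMod 4)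
    (hc : c (k + 1) = c k ∨ c (k + 1) = c k + (-1) ^ k.val) :
    (balancedHypercube n).Adj (cycleVertex j c k) (cycleVertex j c (k + 1)) := by
  rw [balancedHypercube, SimpleGraph.fromRel_adj]
  refine ⟨(cycleVertex_injective j c).ne (by simp [show (1 : ZMod 4) ≠ 0 by decide]),
    Or.inl ⟨Or.inl (by simp [cycleVertex]), ?_⟩⟩
  rcases hc with hc | hc
  · refine Or.inl fun i hi => ?_
    by_cases hij : i = j
    · subst hij; simp [cycleVertex, hi, hc]
    · simp [cycleVertex, hi, hij]
  · exact Or.inr ⟨j, hj, by simp [cycleVertex, hj, hc],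
      fun i hi hij => by simp [cycleVertex, hi, hij]⟩

def zigzag (k : ZMod 4) : ZMod 4 := if k.val % 2 = 0 then -1 else 0

theorem zigzag_add_one (k : ZMod 4) : zigzag (k + 1) = zigzag k + (-1) ^ k.val := by
  revert k; decide

theorem zigzag_ne_one (k : ZMod 4) : zigzag k ≠ 1 := by
  revert k; decide

theorem zigzag_ne_self (k : ZMod 4) : zigzag k ≠ k := by
  revert k; decide

def cutCycle (j₁ j : Fin n) : Set (Fin n → ZMod 4) :=
  if j = 0 then Set.range (cycleVertex j₁ zigzag) else Set.range (cycleVertex j 1)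

theorem cutCycle_nonempty (j₁ j : Fin n) : (cutCycle j₁ j).Nonempty := by
  unfold cutCycle
  split_ifs <;> exact Set.range_nonempty _

variable {j₁ : Fin n}

theorem exists_four_cycle_cutCycle (hj₁ : j₁ ≠ 0) (j : Fin n) :
    ∃ a b c d : Fin n → ZMod 4, a ≠ c ∧ b ≠ d ∧
      (balancedHypercube n).Adj a b ∧ (balancedHypercube n).Adj b c ∧
      (balancedHypercube n).Adj c d ∧ (balancedHypercube n).Adj d a ∧
      cutCycle j₁ j = {a, b, c, d} := by
  unfold cutCycle
  split_ifs with hj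
  · exact SimpleGraph.exists_four_cycle_of_adj_succ (cycleVertex_injective _ _)
      fun k => adj_cycleVertex_succ hj₁ k (Or.inr (zigzag_add_one k))
  · exact SimpleGraph.exists_four_cycle_of_adj_succ (cycleVertex_injective _ _)
      fun k => adj_cycleVertex_succ hj k (Or.inl rfl)

theorem apply_eq_one_of_mem_cutCycle {j : Fin n} (hj : j ≠ 0) {v : Fin n → ZMod 4}
    (hv : v ∈ cutCycle j₁ j) : v j = 1 := by
  rw [cutCycle, if_neg hj, mem_range_cycleVertex hj] at hv
  exact hv.1

theorem apply_ne_one_of_mem_cutCycle (hj₁ : j₁ ≠ 0) {j j' : Fin n} (hj : j ≠ 0)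
    (hj' : j' ≠ j) {v : Fin n → ZMod 4} (hv : v ∈ cutCycle j₁ j') : v j ≠ 1 := by
  unfold cutCycle at hv
  split_ifs at hv with h0
  · rw [mem_range_cycleVertex hj₁] at hv
    by_cases hjj₁ : j = j₁
    · subst hjj₁; rw [hv.1]; exact zigzag_ne_one _
    · rw [hv.2 j hj hjj₁]; decide
  · rw [mem_range_cycleVertex h0] at hv
    rw [hv.2 j hj (Ne.symm hj')]; decide

theorem pairwise_disjoint_cutCycle (hj₁ : j₁ ≠ 0) : Pairwise (Disjoint on cutCycle j₁) := by
  intro i j hij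
  by_cases hj : j = 0
  · have hi : i ≠ 0 := hj ▸ hij
    exact Set.disjoint_left.2 fun v hvi hvj =>
      apply_ne_one_of_mem_cutCycle hj₁ hi (Ne.symm hij) hvj (apply_eq_one_of_mem_cutCycle hi hvi)
  · exact Set.disjoint_right.2 fun v hvj hvi =>
      apply_ne_one_of_mem_cutCycle hj₁ hj hij hvi (apply_eq_one_of_mem_cutCycle hj hvj)

theorem const_not_mem_cutCycle (hj₁ : j₁ ≠ 0) {a : ZMod 4} (ha : a ≠ 1) (j : Fin n) :
    (fun _ => a) ∉ cutCycle j₁ j := by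
  unfold cutCycle
  split_ifs with hj
  · rw [mem_range_cycleVertex hj₁]
    exact fun h => zigzag_ne_self a h.1.symm
  · rw [mem_range_cycleVertex hj]
    exact fun h => ha h.1

theorem exists_mem_cutCycle_of_adj_zero (hj₁ : j₁ ≠ 0) {y : Fin n → ZMod 4}
    (h : (balancedHypercube n).Adj 0 y) : ∃ j, y ∈ cutCycle j₁ j := by
  obtain ⟨hhead, htail | ⟨j, hj, hyj, htail⟩⟩ := adj_zero_cases h
  · refine ⟨0, ?_⟩
    rw [cutCycle, if_pos rfl, mem_range_cycleVertex hj₁, htail j₁ hj₁]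
    exact ⟨by rcases hhead with h | h <;> rw [h] <;> decide, fun i hi _ => htail i hi⟩
  · refine ⟨j, ?_⟩
    rw [cutCycle, if_neg hj, mem_range_cycleVertex hj]
    exact ⟨hyj, htail⟩

end BalancedHypercube

open BalancedHypercube Finset

/-- For `n ≥ 2`, there is a family of exactly `n` vertex-disjoint `4`-cycles in
`BH_n` whose vertex deletion disconnects `BH_n`; hence `κ(BH_n; C_4) ≤ n`. -/
theorem balancedHypercube_C4_structure_cut (n : ℕ) [NeZero n] (hn : 2 ≤ n) :
    ∃ F : Finset (Set (Fin n → ZMod 4)), F.card = n ∧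
      (↑F : Set (Set (Fin n → ZMod 4))).Pairwise Disjoint ∧
      (∀ A ∈ F, ∃ a b c d : Fin n → ZMod 4, a ≠ c ∧ b ≠ d ∧
        (balancedHypercube n).Adj a b ∧ (balancedHypercube n).Adj b c ∧
        (balancedHypercube n).Adj c d ∧ (balancedHypercube n).Adj d a ∧
        A = {a, b, c, d}) ∧
      ¬ ((balancedHypercube n).induce ((⋃ A ∈ F, A)ᶜ)).Connected := by
  obtain ⟨j₁, hj₁⟩ : ∃ j : Fin n, j ≠ 0 := ⟨⟨1, hn⟩, by simp [Fin.ext_iff]⟩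
  have hdisj := pairwise_disjoint_cutCycle hj₁
  have hinj := hdisj.injective_of_disjoint (cutCycle_nonempty j₁)
  refine ⟨univ.image (cutCycle j₁), by simp [card_image_of_injective _ hinj], ?_, ?_, ?_⟩
  · rw [coe_image, coe_univ, Set.image_univ]
    exact hdisj.range_pairwise
  · simpa using exists_four_cycle_cutCycle hj₁
  · have hunion : ⋃ A ∈ univ.image (cutCycle j₁), A = ⋃ j, cutCycle j₁ j := by simp
    rw [hunion]
    refine SimpleGraph.not_connected_induce_of_isolated (v := 0) (w := fun _ => 2) ?_ ?_ ?_ ?_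
    · simp only [Set.mem_compl_iff, Set.mem_iUnion, not_exists]
      exact const_not_mem_cutCycle hj₁ (by decide : (0 : ZMod 4) ≠ 1)
    · simpa only [Set.mem_compl_iff, Set.mem_iUnion, not_exists] using
        const_not_mem_cutCycle hj₁ (by decide : (2 : ZMod 4) ≠ 1)
    · exact fun h => (by decide : (0 : ZMod 4) ≠ 2) (congrFun h 0)
    · intro y hy hyc
      exact hyc (Set.mem_iUnion.2 (exists_mem_cutCycle_of_adj_zero hj₁ hy))
end
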